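/- Fix a finite action set A, a probability mass function μ with μ(a) > 0 for all a, Q : A → ℝ, and τ ∈ (0,1). The τ-expectile V_τ of Q under μ satisfies min_a Q(a) ≤ V_τ ≤ max_a Q(a), and if Q is not constant then the inequalities with min and max are strict. -/

import Mathlib

/-!
The asymmetric squared loss is continuously differentiable in `V`, so a minimiser `V` satisfies
the first-order condition `∑ a, μ a * w a * (Q a - V) = 0`, where the weights `w a ∈ {τ, 1 - τ}`
are positive. Unless `Q ≡ V`, this weighted sum of the deviations `Q a - V` can only vanish if
some `Q a` lies strictly below `V` and some strictly above, which gives the strict bounds; if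
`Q ≡ V`, the bounds hold with equality.
-/

open Finset Set

noncomputable def expectileWeight (τ q v : ℝ) : ℝ := |τ - if q < v then 1 else 0|

noncomputable def expectileLoss (τ q v : ℝ) : ℝ := expectileWeight τ q v * (q - v) ^ 2

noncomputable def expectileScore (τ q v : ℝ) : ℝ := expectileWeight τ q v * (q - v)

section Pointwise

variable {τ q v : ℝ}

lemma expectileWeight_of_le (hτ : 0 ≤ τ) (h : v ≤ q) : expectileWeight τ q v = τ := by
  simp [expectileWeight, not_lt.2 h, abs_of_nonneg hτ]

lemma expectileWeight_of_lt (hτ : τ ≤ 1) (h : q < v) : expectileWeight τ q v = 1 - τ := by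
  simp [expectileWeight, h, abs_of_nonpos (sub_nonpos.2 hτ)]

lemma expectileWeight_pos (hτ : τ ∈ Ioo (0 : ℝ) 1) : 0 < expectileWeight τ q v := by
  rcases lt_or_ge q v with h | h
  · rw [expectileWeight_of_lt hτ.2.le h]; linarith [hτ.2]
  · rw [expectileWeight_of_le hτ.1.le h]; exact hτ.1

lemma expectileScore_pos_iff (hτ : τ ∈ Ioo (0 : ℝ) 1) : 0 < expectileScore τ q v ↔ v < q := by
  rw [expectileScore, mul_pos_iff_of_pos_left (expectileWeight_pos hτ), sub_pos]

lemma expectileScore_neg_iff (hτ : τ ∈ Ioo (0 : ℝ) 1) : expectileScore τ q v < 0 ↔ q < v := by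
  rw [expectileScore, ← neg_pos, ← mul_neg, mul_pos_iff_of_pos_left (expectileWeight_pos hτ),
    neg_sub, sub_pos]

/-- Second-order Taylor bound: the loss is `C¹` in `v` with derivative `-2 * expectileScore`,
which is `2`-Lipschitz because the weight is at most `1`. -/
lemma expectileLoss_add_le (hτ : τ ∈ Icc (0 : ℝ) 1) (t : ℝ) :
    expectileLoss τ q (v + t) ≤ expectileLoss τ q v - 2 * t * expectileScore τ q v + t ^ 2 := by
  obtain ⟨hτ0, hτ1⟩ := hτ
  have hτ1' : 0 ≤ 1 - τ := sub_nonneg.2 hτ1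
  simp only [expectileLoss, expectileScore]
  rcases lt_or_ge q (v + t) with h | h <;> rcases lt_or_ge q v with h' | h'
  · rw [expectileWeight_of_lt hτ1 h, expectileWeight_of_lt hτ1 h']
    nlinarith
  · rw [expectileWeight_of_lt hτ1 h, expectileWeight_of_le hτ0 h']
    nlinarith [mul_nonneg hτ1' (mul_nonneg (sub_nonneg.2 h') (by linarith : 0 ≤ 2 * t - (q - v)))]
  · rw [expectileWeight_of_le hτ0 h, expectileWeight_of_lt hτ1 h']
    nlinarith [mul_nonneg hτ0 (mul_nonneg (sub_nonneg.2 h'.le) (by linarith : 0 ≤ (q - v) - 2 * t))]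
  · rw [expectileWeight_of_le hτ0 h, expectileWeight_of_le hτ0 h']
    nlinarith

end Pointwise

section Risk

variable {A : Type*} [Fintype A] {μ Q : A → ℝ} {τ v : ℝ}

noncomputable def expectileRisk (μ Q : A → ℝ) (τ v : ℝ) : ℝ := ∑ a, μ a * expectileLoss τ (Q a) v

lemma expectileRisk_add_le (hμ : ∀ a, 0 ≤ μ a) (hτ : τ ∈ Icc (0 : ℝ) 1) (t : ℝ) :
    expectileRisk μ Q τ (v + t) ≤
      expectileRisk μ Q τ v - 2 * t * ∑ a, μ a * expectileScore τ (Q a) v + t ^ 2 * ∑ a, μ a := by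
  calc expectileRisk μ Q τ (v + t)
      ≤ ∑ a, μ a * (expectileLoss τ (Q a) v - 2 * t * expectileScore τ (Q a) v + t ^ 2) :=
        sum_le_sum fun a _ => mul_le_mul_of_nonneg_left (expectileLoss_add_le hτ t) (hμ a)
    _ = _ := by
        simp only [expectileRisk, mul_sum, ← sum_sub_distrib, ← sum_add_distrib]
        exact sum_congr rfl fun a _ => by ring

/-- Moving `v` by `t = S / (M + 1)` changes the risk by at most `-2 t S + t² M ≤ -t S`,
which is negative unless `S = 0`. -/
lemma sum_mul_expectileScore_eq_zero (hμ : ∀ a, 0 ≤ μ a) (hτ : τ ∈ Icc (0 : ℝ) 1)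
    (hv : ∀ w, expectileRisk μ Q τ v ≤ expectileRisk μ Q τ w) :
    ∑ a, μ a * expectileScore τ (Q a) v = 0 := by
  set S := ∑ a, μ a * expectileScore τ (Q a) v
  set M := ∑ a, μ a
  have hM : 0 ≤ M := sum_nonneg fun a _ => hμ a
  by_contra hS
  set t := S / (M + 1)
  have htS : 0 < t * S := by rw [div_mul_eq_mul_div, ← sq]; positivity
  have hdecrease : t ^ 2 * M ≤ t * S := by
    calc t ^ 2 * M ≤ t ^ 2 * (M + 1) := by gcongr; linarith
      _ = t * (S / (M + 1) * (M + 1)) := by ring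
      _ = t * S := by rw [div_mul_cancel₀ S (by positivity)]
  linarith [hv (v + t), expectileRisk_add_le (Q := Q) hμ hτ t (v := v)]

lemma exists_lt_and_exists_gt_of_sum_mul_expectileScore_eq_zero (hμ : ∀ a, 0 < μ a)
    (hτ : τ ∈ Ioo (0 : ℝ) 1) (hS : ∑ a, μ a * expectileScore τ (Q a) v = 0)
    (hne : ∃ a, Q a ≠ v) : (∃ a, Q a < v) ∧ ∃ a, v < Q a := by
  obtain ⟨a, ha⟩ := hne
  have hscore : expectileScore τ (Q a) v ≠ 0 := ha.lt_or_gt.elim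
    (fun h => ((expectileScore_neg_iff hτ).2 h).ne) (fun h => ((expectileScore_pos_iff hτ).2 h).ne')
  have hterm : μ a * expectileScore τ (Q a) v ≠ 0 := mul_ne_zero (hμ a).ne' hscore
  obtain ⟨b, -, hb⟩ := exists_pos_of_sum_zero_of_exists_nonzero
    (fun a => -(μ a * expectileScore τ (Q a) v)) (by rw [sum_neg_distrib, hS, neg_zero])
    ⟨a, mem_univ a, neg_ne_zero.2 hterm⟩
  obtain ⟨c, -, hc⟩ := exists_pos_of_sum_zero_of_exists_nonzero _ hS ⟨a, mem_univ a, hterm⟩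
  exact ⟨⟨b, (expectileScore_neg_iff hτ).1 (neg_of_mul_neg_right (neg_pos.1 hb) (hμ b).le)⟩,
    ⟨c, (expectileScore_pos_iff hτ).1 (pos_of_mul_pos_right hc (hμ c).le)⟩⟩

end Risk

theorem stmt_9_general {A : Type*} [Fintype A] [Nonempty A]
    (μ Q : A → ℝ) (hμpos : ∀ a, 0 < μ a)
    (τ : ℝ) (hτ : τ ∈ Set.Ioo (0 : ℝ) 1)
    (Vτ : ℝ)
    (hVτ : ∀ W : ℝ,
      ∑ a, μ a * (|τ - if Q a < Vτ then 1 else 0| * (Q a - Vτ) ^ 2) ≤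
      ∑ a, μ a * (|τ - if Q a < W then 1 else 0| * (Q a - W) ^ 2)) :
    (Finset.univ.inf' Finset.univ_nonempty Q ≤ Vτ ∧
      Vτ ≤ Finset.univ.sup' Finset.univ_nonempty Q) ∧
    ((¬ ∀ a b, Q a = Q b) →
      Finset.univ.inf' Finset.univ_nonempty Q < Vτ ∧
      Vτ < Finset.univ.sup' Finset.univ_nonempty Q) := by
  by_cases hconst : ∀ a, Q a = Vτ
  · obtain ⟨a⟩ := ‹Nonempty A›
    exact ⟨⟨(inf'_le Q (mem_univ a)).trans_eq (hconst a),
      (hconst a).symm.trans_le (le_sup' Q (mem_univ a))⟩,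
      fun hnc => (hnc fun a b => (hconst a).trans (hconst b).symm).elim⟩
  have hscore := sum_mul_expectileScore_eq_zero (fun a => (hμpos a).le) (Ioo_subset_Icc_self hτ) hVτ
  obtain ⟨⟨a, ha⟩, ⟨b, hb⟩⟩ :=
    exists_lt_and_exists_gt_of_sum_mul_expectileScore_eq_zero hμpos hτ hscore (not_forall.1 hconst)
  have hlt : univ.inf' univ_nonempty Q < Vτ := (inf'_lt_iff _).2 ⟨a, mem_univ a, ha⟩
  have hgt : Vτ < univ.sup' univ_nonempty Q := (lt_sup'_iff _).2 ⟨b, mem_univ b, hb⟩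
  exact ⟨⟨hlt.le, hgt.le⟩, fun _ => ⟨hlt, hgt⟩⟩

theorem stmt_9 {A : Type*} [Fintype A] [Nonempty A]
    (μ Q : A → ℝ) (hμpos : ∀ a, 0 < μ a) (hμsum : ∑ a, μ a = 1)
    (τ : ℝ) (hτ : τ ∈ Set.Ioo (0 : ℝ) 1)
    (Vτ : ℝ)
    (hVτ : ∀ W : ℝ,
      ∑ a, μ a * (|τ - if Q a < Vτ then 1 else 0| * (Q a - Vτ) ^ 2) ≤
      ∑ a, μ a * (|τ - if Q a < W then 1 else 0| * (Q a - W) ^ 2)) :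
    (Finset.univ.inf' Finset.univ_nonempty Q ≤ Vτ ∧
      Vτ ≤ Finset.univ.sup' Finset.univ_nonempty Q) ∧
    ((¬ ∀ a b, Q a = Q b) →
      Finset.univ.inf' Finset.univ_nonempty Q < Vτ ∧
      Vτ < Finset.univ.sup' Finset.univ_nonempty Q) :=
  stmt_9_general μ Q hμpos τ hτ Vτ hVτ
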